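/- ∑_{k=1}^∞ (ζ(k+1) − 1)·(k+1) = 1 + ζ(2), where ζ is the Riemann zeta function (the case D(1,−1;1) of the Adamchik–Srivastava formula). -/

import Mathlib

/-- The Riemann zeta function at a natural argument, `ζ(s) = ∑_{n=1}^∞ 1/n^s`. -/
noncomputable def zetaNat (s : ℕ) : ℝ := ∑' n : ℕ, 1 / ((n : ℝ) + 1) ^ s

/-!
Expanding `ζ(k+2) - 1 = ∑_{n ≥ 0} (n+2)^{-(k+2)}` turns the series into a double series of
nonnegative terms `(k+2)/(n+2)^{k+2}`, so the two sums may be interchanged. For fixed `n` the sum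
over `k` is a differentiated geometric series, equal to `1/(n+1) - 1/(n+2) + 1/(n+1)^2`; summing
over `n`, the first two terms telescope to `1` and the last gives `ζ(2)`.
-/

open Filter Topology

theorem HasSum.fiberwise_swap_of_nonneg {β γ : Type*} {F : β × γ → ℝ} (hF : 0 ≤ F)
    {row : β → ℝ} {col : γ → ℝ} {a : ℝ} (hrow : ∀ b, HasSum (fun c ↦ F (b, c)) (row b))
    (ha : HasSum row a) (hcol : ∀ c, HasSum (fun b ↦ F (b, c)) (col c)) : HasSum col a := by
  have hsumF : Summable F := (summable_prod_of_nonneg hF).2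
    ⟨fun b ↦ (hrow b).summable, by simpa only [fun b ↦ (hrow b).tsum_eq] using ha.summable⟩
  have hF_sum : HasSum F a := (hsumF.hasSum.prod_fiberwise hrow).unique ha ▸ hsumF.hasSum
  exact ((Equiv.prodComm γ β).hasSum_iff.2 hF_sum).prod_fiberwise hcol

theorem hasSum_sub_succ_of_antitone {f : ℕ → ℝ} {l : ℝ} (hf : Antitone f)
    (hl : Tendsto f atTop (𝓝 l)) : HasSum (fun n ↦ f n - f (n + 1)) (f 0 - l) := by
  rw [hasSum_iff_tendsto_nat_of_nonneg fun n ↦ sub_nonneg.2 (hf n.le_succ)]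
  simpa only [Finset.sum_range_sub'] using (tendsto_const_nhds (x := f 0)).sub hl

theorem hasSum_zetaNat {s : ℕ} (hs : 1 < s) :
    HasSum (fun n : ℕ ↦ 1 / ((n : ℝ) + 1) ^ s) (zetaNat s) := by
  have h := (summable_nat_add_iff 1).2 (Real.summable_one_div_nat_pow.2 hs)
  push_cast at h
  exact h.hasSum

theorem hasSum_zetaNat_sub_one {s : ℕ} (hs : 1 < s) :
    HasSum (fun n : ℕ ↦ 1 / ((n : ℝ) + 2) ^ s) (zetaNat s - 1) := by
  simpa only [Finset.sum_range_one, Nat.cast_zero, zero_add, one_pow, div_one, Nat.cast_add,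
    Nat.cast_one, add_assoc, one_add_one_eq_two] using
    (hasSum_nat_add_iff' 1).2 (hasSum_zetaNat hs)

theorem hasSum_coe_add_two_mul_geometric {𝕜 : Type*} [NormedDivisionRing 𝕜] {r : 𝕜}
    (hr : ‖r‖ < 1) :
    HasSum (fun k : ℕ ↦ ((k : 𝕜) + 2) * r ^ (k + 2)) (r / (1 - r) ^ 2 - r) := by
  simpa only [Finset.sum_range_succ, Finset.sum_range_zero, Nat.cast_zero, Nat.cast_one,
    zero_mul, one_mul, pow_one, zero_add, Nat.cast_add, Nat.cast_ofNat] using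
    (hasSum_nat_add_iff' (f := fun k : ℕ ↦ (k : 𝕜) * r ^ k) 2).2
      (hasSum_coe_mul_geometric_of_norm_lt_one hr)

theorem hasSum_add_two_div_pow {x : ℝ} (hx : 1 < x) :
    HasSum (fun k : ℕ ↦ ((k : ℝ) + 2) / x ^ (k + 2)) (1 / (x - 1) + 1 / (x - 1) ^ 2 - 1 / x) := by
  have hr : ‖x⁻¹‖ < 1 := by
    rw [norm_inv, Real.norm_of_nonneg (by linarith)]
    exact inv_lt_one_of_one_lt₀ hx
  have hvalue : x⁻¹ / (1 - x⁻¹) ^ 2 - x⁻¹ = 1 / (x - 1) + 1 / (x - 1) ^ 2 - 1 / x := by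
    have : x - 1 ≠ 0 := by linarith
    field_simp
    ring
  rw [← hvalue]
  exact (hasSum_coe_add_two_mul_geometric hr).congr_fun fun k ↦ by rw [inv_pow, div_eq_mul_inv]

/-- `∑_{k=1}^∞ (ζ(k+1) − 1)(k+1) = 1 + ζ(2)`. -/
theorem D_one_neg_one_one :
    HasSum (fun k : ℕ => (zetaNat (k + 2) - 1) * ((k : ℝ) + 2)) (1 + zetaNat 2) := by
  have hrow (n : ℕ) : HasSum (fun k : ℕ ↦ ((k : ℝ) + 2) / ((n : ℝ) + 2) ^ (k + 2))
      (1 / ((n : ℝ) + 1) - 1 / ((n : ℝ) + 2) + 1 / ((n : ℝ) + 1) ^ 2) := by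
    convert hasSum_add_two_div_pow (x := (n : ℝ) + 2) (by linarith [n.cast_nonneg (α := ℝ)])
      using 1
    ring
  have htelescope : HasSum (fun n : ℕ ↦ 1 / ((n : ℝ) + 1) - 1 / ((n : ℝ) + 2)) 1 := by
    have hanti : Antitone fun n : ℕ ↦ 1 / ((n : ℝ) + 1) := fun _ _ ↦ Nat.one_div_le_one_div
    simpa [add_assoc, one_add_one_eq_two] using
      hasSum_sub_succ_of_antitone hanti tendsto_one_div_add_atTop_nhds_zero_nat
  have hcol (k : ℕ) : HasSum (fun n : ℕ ↦ ((k : ℝ) + 2) / ((n : ℝ) + 2) ^ (k + 2))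
      ((zetaNat (k + 2) - 1) * ((k : ℝ) + 2)) := by
    simpa only [one_div_mul_eq_div] using
      (hasSum_zetaNat_sub_one (s := k + 2) (by omega)).mul_right ((k : ℝ) + 2)
  exact (htelescope.add (hasSum_zetaNat one_lt_two)).fiberwise_swap_of_nonneg
    (F := fun p : ℕ × ℕ ↦ ((p.2 : ℝ) + 2) / ((p.1 : ℝ) + 2) ^ (p.2 + 2))
    (fun _ ↦ by positivity) hrow hcol
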